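/- arXiv:1001.5296 — 4 statements merged into one kernel-verified Lean document; each statement's English description precedes it below -/
import Mathlib

section
/- Let K be a field equipped with a nonarchimedean multiplicative norm ‖·‖ with ‖2‖ ≤ 1, and equip Mₙ(K) with the entrywise sup norm. Let X ∈ Mₙ(K) with ‖X‖ < 1 and with 1 − X invertible. Then ‖(1+X)·(1−X)⁻¹ − (1 + 2X)‖ ≤ ‖X‖². -/
/-!
Writing `A = (1 - X)⁻¹`, one has `(1 + X) A - (1 + 2X) = 2 X² A`. For the ultrametric sup norm the
entrywise sums in a matrix product cost nothing, so the norm is submultiplicative, and `‖2 Y‖ ≤ ‖Y‖`.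
Finally `A = 1 + X A` forces `‖A‖ ≤ 1` once `‖X‖ < 1`.
-/

open Matrix

attribute [local instance] Matrix.seminormedAddCommGroup

theorem one_add_mul_sub_one_add_two_nsmul {R : Type*} [Ring R] {x a : R} (h : (1 - x) * a = 1) :
    (1 + x) * a - (1 + 2 • x) = 2 • (x ^ 2 * a) :=
  calc (1 + x) * a - (1 + 2 • x) = (1 + x) * a - (1 + 2 • x) * ((1 - x) * a) := by
        rw [h, mul_one]
    _ = 2 • (x ^ 2 * a) := by noncomm_ring

namespace Matrix

variable {l m n α : Type*} [Fintype l] [Fintype m] [Fintype n]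

instance instIsUltrametricDist [SeminormedAddCommGroup α] [IsUltrametricDist α] :
    IsUltrametricDist (Matrix m n α) :=
  Pi.instIsUltrametricDist

theorem norm_mul_le_of_isUltrametricDist [NonUnitalSeminormedRing α] [IsUltrametricDist α]
    (A : Matrix l m α) (B : Matrix m n α) : ‖A * B‖ ≤ ‖A‖ * ‖B‖ := by
  refine (norm_le_iff (by positivity)).2 fun i j => ?_
  refine IsUltrametricDist.norm_sum_le_of_forall_le_of_nonneg (by positivity) fun k _ => ?_
  exact (norm_mul_le _ _).trans <| mul_le_mul (norm_entry_le_entrywise_sup_norm A)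
    (norm_entry_le_entrywise_sup_norm B) (norm_nonneg _) (norm_nonneg _)

theorem norm_one_le [DecidableEq n] [SeminormedRing α] [NormOneClass α] :
    ‖(1 : Matrix n n α)‖ ≤ 1 := by
  refine (norm_le_iff zero_le_one).2 fun i j => ?_
  rw [one_apply]
  split_ifs <;> simp

theorem norm_le_one_of_one_sub_mul_eq_one [DecidableEq n] [SeminormedRing α] [NormOneClass α]
    [IsUltrametricDist α] {X A : Matrix n n α} (hX : ‖X‖ < 1) (h : (1 - X) * A = 1) :
    ‖A‖ ≤ 1 := by
  have hA : A = 1 + X * A := by rw [← h]; noncomm_ring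
  by_contra! hA_gt
  have : ‖A‖ ≤ max 1 (‖X‖ * ‖A‖) :=
    calc ‖A‖ = ‖1 + X * A‖ := congrArg _ hA
      _ ≤ max ‖(1 : Matrix n n α)‖ ‖X * A‖ := IsUltrametricDist.norm_add_le_max _ _
      _ ≤ max 1 (‖X‖ * ‖A‖) := max_le_max norm_one_le (norm_mul_le_of_isUltrametricDist _ _)
  rcases le_max_iff.1 this with hA_le_one | hA_le
  · linarith
  · nlinarith

end Matrix

theorem cayley_approx_general {K : Type*} [NormedField K]
    (hna : IsNonarchimedean fun x : K => ‖x‖)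
    {n : ℕ} (X : Matrix (Fin n) (Fin n) K)
    (hX : ‖X‖ < 1) (h1X : IsUnit (1 - X)) :
    ‖(1 + X) * (1 - X)⁻¹ - (1 + 2 • X)‖ ≤ ‖X‖ ^ 2 := by
  have := IsUltrametricDist.isUltrametricDist_of_isNonarchimedean_norm hna
  have hinv : (1 - X) * (1 - X)⁻¹ = 1 := mul_nonsing_inv _ ((isUnit_iff_isUnit_det _).1 h1X)
  rw [one_add_mul_sub_one_add_two_nsmul hinv]
  calc ‖2 • (X ^ 2 * (1 - X)⁻¹)‖ ≤ ‖X ^ 2 * (1 - X)⁻¹‖ := IsUltrametricDist.norm_nsmul_le _ 2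
    _ ≤ ‖X ^ 2‖ * ‖(1 - X)⁻¹‖ := norm_mul_le_of_isUltrametricDist _ _
    _ ≤ ‖X‖ * ‖X‖ * 1 := mul_le_mul (sq X ▸ norm_mul_le_of_isUltrametricDist X X)
        (norm_le_one_of_one_sub_mul_eq_one hX hinv) (norm_nonneg _) (by positivity)
    _ = ‖X‖ ^ 2 := by ring

/-- Over a nonarchimedean normed field with `‖2‖ ≤ 1`, if `‖X‖ < 1` (entrywise sup norm)
and `1 - X` is invertible, then the Cayley transform satisfies
`‖(1+X)(1-X)⁻¹ - (1 + 2X)‖ ≤ ‖X‖²`. -/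
theorem cayley_approx {K : Type*} [NormedField K]
    (hna : IsNonarchimedean fun x : K => ‖x‖) (h2 : ‖(2 : K)‖ ≤ 1)
    {n : ℕ} (X : Matrix (Fin n) (Fin n) K)
    (hX : ‖X‖ < 1) (h1X : IsUnit (1 - X)) :
    ‖(1 + X) * (1 - X)⁻¹ - (1 + 2 • X)‖ ≤ ‖X‖ ^ 2 :=
  cayley_approx_general hna X hX h1X
end

section
/- Let K be a field and let J ∈ Mₙ(K) satisfy Jᵀ = −J. Suppose X ∈ Mₙ(K) is J-skew-adjoint, i.e. Xᵀ·J + J·X = 0, and v, w ∈ Kⁿ satisfy X·v = λ·v and X·w = μ·w. Then Y := v·wᵀ·J + w·vᵀ·J is J-skew-adjoint and satisfies X·Y − Y·X = (λ+μ)·Y. -/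
/-! `Y = S J` with `S = v wᵀ + w vᵀ` symmetric, so `Yᵀ J + J Y = -J S J + J S J = 0`.
Each summand `v wᵀ J` is already an eigenvector of `ad X` for `λ + μ`: `X` acts on `v` from the
left, and from the right it crosses `J` as `-Xᵀ` and acts on `w`. -/

open Matrix

namespace Matrix

variable {m R : Type*} [Fintype m] [CommRing R]

theorem transpose_mul_mul_add_mul_mul_eq_zero_of_isSymm {S J : Matrix m m R} (hS : S.IsSymm)
    (hJ : Jᵀ = -J) : (S * J)ᵀ * J + J * (S * J) = 0 := by
  rw [transpose_mul, hS.eq, hJ, Matrix.neg_mul, Matrix.neg_mul, Matrix.mul_assoc, neg_add_cancel]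

/-- `J X = -Xᵀ J` moves `X` across `J` onto `w`, which is why the eigenvalue enters with a minus
sign. -/
theorem vecMulVec_mul_mul_of_mulVec_eq_smul {J X : Matrix m m R} (hX : Xᵀ * J + J * X = 0)
    (v : m → R) {w : m → R} {mu : R} (hw : X *ᵥ w = mu • w) :
    vecMulVec v w * J * X = -(mu • (vecMulVec v w * J)) := by
  rw [Matrix.mul_assoc, eq_neg_of_add_eq_zero_right hX, Matrix.mul_neg, ← Matrix.mul_assoc,
    vecMulVec_mul, vecMul_transpose, hw, vecMulVec_smul, smul_mul_assoc]

theorem mul_vecMulVec_mul_sub_of_mulVec_eq_smul {J X : Matrix m m R} (hX : Xᵀ * J + J * X = 0)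
    {v w : m → R} {lam mu : R} (hv : X *ᵥ v = lam • v) (hw : X *ᵥ w = mu • w) :
    X * (vecMulVec v w * J) - vecMulVec v w * J * X = (lam + mu) • (vecMulVec v w * J) := by
  rw [vecMulVec_mul_mul_of_mulVec_eq_smul hX v hw, ← Matrix.mul_assoc, mul_vecMulVec, hv,
    smul_vecMulVec, smul_mul_assoc, sub_neg_eq_add, add_smul]

end Matrix

/-- Symplectic case: if `Jᵀ = -J`, `X` is `J`-skew-adjoint, and `v, w` are eigenvectors
of `X` with eigenvalues `λ, μ`, then `Y = v wᵀ J + w vᵀ J` is `J`-skew-adjoint and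
`[X, Y] = (λ + μ) Y`. -/
theorem ad_eigen_symplectic {K : Type*} [Field K] {n : ℕ}
    (J X : Matrix (Fin n) (Fin n) K) (hJ : Jᵀ = -J)
    (hX : Xᵀ * J + J * X = 0)
    (v w : Fin n → K) (lam mu : K)
    (hv : X *ᵥ v = lam • v) (hw : X *ᵥ w = mu • w) :
    (vecMulVec v w * J + vecMulVec w v * J)ᵀ * J
        + J * (vecMulVec v w * J + vecMulVec w v * J) = 0 ∧
    X * (vecMulVec v w * J + vecMulVec w v * J)
        - (vecMulVec v w * J + vecMulVec w v * J) * X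
      = (lam + mu) • (vecMulVec v w * J + vecMulVec w v * J) := by
  constructor
  · have hS : (vecMulVec v w + vecMulVec w v).IsSymm := by
      rw [IsSymm, transpose_add, transpose_vecMulVec, transpose_vecMulVec, add_comm]
    simpa only [add_mul] using transpose_mul_mul_add_mul_mul_eq_zero_of_isSymm hS hJ
  · have hvw := mul_vecMulVec_mul_sub_of_mulVec_eq_smul hX hv hw
    have hwv := mul_vecMulVec_mul_sub_of_mulVec_eq_smul hX hw hv
    rw [add_comm mu] at hwv
    calc _ = (X * (vecMulVec v w * J) - vecMulVec v w * J * X)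
            + (X * (vecMulVec w v * J) - vecMulVec w v * J * X) := by
          rw [Matrix.mul_add, Matrix.add_mul]; abel
      _ = _ := by rw [hvw, hwv, smul_add]
end

section
/- Let K be a field and let J be an invertible n×n matrix over K with Jᵀ = −J. Suppose X ∈ Mₙ(K) is J-skew-adjoint, i.e. Xᵀ·J + J·X = 0, and v ∈ Kⁿ is a nonzero vector with X·v = λ·v. Then Y := v·vᵀ·J is a nonzero J-skew-adjoint matrix satisfying X·Y − Y·X = (2λ)·Y. In particular, 2λ is an eigenvalue of the adjoint operator ad(X) : Y ↦ XY − YX acting on the space of J-skew-adjoint matrices. -/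
/-!
For `Y = v vᵀ J` one has `X Y = (X v) vᵀ J = λ Y`, while `J X = -Xᵀ J` gives
`Y X = -v (X v)ᵀ J = -λ Y`; so the two eigenvalue contributions add up to `2λ`.
`Y` is `J`-skew-adjoint because `v vᵀ` is symmetric and `J` skew, and `Y ≠ 0` because
`v vᵀ ≠ 0` and `J` is invertible.
-/

open Matrix

section

variable {R ι : Type*} [CommRing R] [Fintype ι]

theorem transpose_mul_add_mul_eq_zero_of_isSymm {J S : Matrix ι ι R} (hJ : Jᵀ = -J)
    (hS : S.IsSymm) : (S * J)ᵀ * J + J * (S * J) = 0 := by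
  rw [transpose_mul, hJ, hS.eq, Matrix.neg_mul, Matrix.neg_mul, Matrix.mul_assoc,
    neg_add_cancel]

theorem commutator_vecMulVec_mul_eq_add_smul {J X : Matrix ι ι R}
    (hX : Xᵀ * J + J * X = 0) {v w : ι → R} {a b : R} (hv : X *ᵥ v = a • v)
    (hw : X *ᵥ w = b • w) :
    X * (vecMulVec v w * J) - vecMulVec v w * J * X = (a + b) • (vecMulVec v w * J) := by
  have hJX : J * X = -(Xᵀ * J) := eq_neg_of_add_eq_zero_right hX
  calc X * (vecMulVec v w * J) - vecMulVec v w * J * X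
      = vecMulVec (X *ᵥ v) w * J + vecMulVec v (X *ᵥ w) * J := by
        rw [← Matrix.mul_assoc, mul_vecMulVec, Matrix.mul_assoc _ J, hJX, Matrix.mul_neg,
          ← Matrix.mul_assoc, vecMulVec_mul v w Xᵀ, vecMul_transpose, sub_neg_eq_add]
    _ = (a + b) • (vecMulVec v w * J) := by
        rw [hv, hw, smul_vecMulVec, vecMulVec_smul, Matrix.smul_mul, Matrix.smul_mul, add_smul]

end

/-- Symplectic case: if `J` is invertible with `Jᵀ = -J`, `X` is `J`-skew-adjoint and
`v ≠ 0` satisfies `X v = λ v`, then `Y = v vᵀ J` is a nonzero `J`-skew-adjoint matrix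
with `[X, Y] = 2λ Y`; in particular `2λ` is a root value of `X`. -/
theorem two_lam_root_value_symplectic {K : Type*} [Field K] {n : ℕ}
    (J X : Matrix (Fin n) (Fin n) K) (hJ : IsUnit J) (hJt : Jᵀ = -J)
    (hX : Xᵀ * J + J * X = 0)
    (v : Fin n → K) (hv : v ≠ 0) (lam : K) (hev : X *ᵥ v = lam • v) :
    vecMulVec v v * J ≠ 0 ∧
    (vecMulVec v v * J)ᵀ * J + J * (vecMulVec v v * J) = 0 ∧
    X * (vecMulVec v v * J) - (vecMulVec v v * J) * X
      = (2 * lam) • (vecMulVec v v * J) := by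
  refine ⟨hJ.mul_left_eq_zero.not.mpr (vecMulVec_ne_zero hv hv),
    transpose_mul_add_mul_eq_zero_of_isSymm hJt (transpose_vecMulVec v v), ?_⟩
  rw [two_mul]
  exact commutator_vecMulVec_mul_eq_add_smul hX hev hev
end

section
/- Let K be a field of characteristic ≠ 2, let n be odd, and let J be an invertible n×n matrix over K with Jᵀ = J. Suppose X ∈ Mₙ(K) is J-skew-adjoint, i.e. Xᵀ·J + J·X = 0, and v ∈ Kⁿ is a nonzero vector with X·v = λ·v for some λ ≠ 0. Then there exists a nonzero J-skew-adjoint matrix Y with X·Y − Y·X = λ·Y; that is, λ is an eigenvalue of ad(X) acting on the space of J-skew-adjoint matrices. -/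
/-!
Since `n` is odd and `2 ≠ 0`, the relation `Xᵀ J = -J X` forces `det X = 0`, so `X` kills some
`w ≠ 0`. The wedge `v ∧ w = v wᵀ - w vᵀ` is skew-symmetric, hence `Y = (v ∧ w) J` is
`J`-skew-adjoint, and `[X, Y] = (X (v ∧ w) + (v ∧ w) Xᵀ) J = (Xv ∧ w + v ∧ Xw) J = λ Y`.
`Y ≠ 0` because `v` is not a multiple of `w`: otherwise `λ v = X v = 0`.
-/

open Matrix

namespace Matrix

variable {ι K : Type*}

theorem det_eq_zero_of_transpose_mul_add_mul_eq_zero [Fintype ι] [DecidableEq ι] [CommRing K]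
    [NoZeroDivisors K] (h2 : (2 : K) ≠ 0) (hι : Odd (Fintype.card ι)) {J X : Matrix ι ι K}
    (hJ : J.det ≠ 0) (hX : Xᵀ * J + J * X = 0) : X.det = 0 := by
  have hdet := congrArg det (eq_neg_of_add_eq_zero_left hX)
  rw [det_mul, det_transpose, det_neg, det_mul, hι.neg_one_pow, neg_one_mul] at hdet
  have : (2 * J.det) * X.det = 0 := by linear_combination hdet
  exact (mul_eq_zero.mp this).resolve_left (mul_ne_zero h2 hJ)

def wedge [Mul K] [Sub K] (v w : ι → K) : Matrix ι ι K :=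
  vecMulVec v w - vecMulVec w v

section wedge

variable [CommRing K]

theorem transpose_wedge (v w : ι → K) : (wedge v w)ᵀ = -wedge v w := by
  simp only [wedge, transpose_sub, transpose_vecMulVec, neg_sub]

theorem wedge_zero_right (v : ι → K) : wedge v 0 = 0 := by
  simp only [wedge, vecMulVec_zero, zero_vecMulVec, sub_self]

theorem smul_wedge (c : K) (v w : ι → K) : wedge (c • v) w = c • wedge v w := by
  simp only [wedge, smul_vecMulVec, vecMulVec_smul, smul_sub]

theorem mul_wedge_add_wedge_mul_transpose [Fintype ι] (X : Matrix ι ι K) (v w : ι → K) :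
    X * wedge v w + wedge v w * Xᵀ = wedge (X *ᵥ v) w + wedge v (X *ᵥ w) := by
  simp only [wedge, mul_sub, sub_mul, mul_vecMulVec, vecMulVec_mul, vecMul_transpose]
  abel

end wedge

theorem exists_eq_smul_of_wedge_eq_zero [Field K] {v w : ι → K} (hw : w ≠ 0)
    (h : wedge v w = 0) : ∃ c : K, v = c • w := by
  obtain ⟨j, hj⟩ : ∃ j, w j ≠ 0 := Function.ne_iff.mp hw
  refine ⟨v j / w j, funext fun i => ?_⟩
  have hij : v i * w j - w i * v j = 0 := congrFun (congrFun h i) j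
  simp only [Pi.smul_apply, smul_eq_mul]
  field_simp
  linear_combination hij

variable [Fintype ι] [CommRing K] {J X M : Matrix ι ι K}

theorem mul_transpose_mul_add_mul_mul_eq_zero (hJt : Jᵀ = J) (hM : Mᵀ = -M) :
    (M * J)ᵀ * J + J * (M * J) = 0 := by
  rw [transpose_mul, hJt, hM, Matrix.mul_neg, Matrix.neg_mul, ← Matrix.mul_assoc, neg_add_cancel]

theorem commutator_mul_eq_of_transpose_mul_add_mul_eq_zero (hX : Xᵀ * J + J * X = 0) :
    X * (M * J) - M * J * X = (X * M + M * Xᵀ) * J := by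
  rw [Matrix.mul_assoc M J X, eq_neg_of_add_eq_zero_right hX, Matrix.mul_neg, ← Matrix.mul_assoc,
    ← Matrix.mul_assoc, add_mul, sub_neg_eq_add]

end Matrix

/-- Odd orthogonal case: over a field of characteristic `≠ 2`, with `n` odd, `J`
invertible symmetric, `X` being `J`-skew-adjoint, every nonzero eigenvalue `λ` of `X`
(with eigenvector `v ≠ 0`) is a root value: there is a nonzero `J`-skew-adjoint `Y`
with `[X, Y] = λ Y`. -/
theorem eigenvalue_is_root_value_odd_orthogonal {K : Type*} [Field K]
    (h2 : (2 : K) ≠ 0) {n : ℕ} (hn : Odd n)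
    (J X : Matrix (Fin n) (Fin n) K) (hJ : IsUnit J) (hJt : Jᵀ = J)
    (hX : Xᵀ * J + J * X = 0)
    (v : Fin n → K) (hv : v ≠ 0) (lam : K) (hlam : lam ≠ 0)
    (hev : X *ᵥ v = lam • v) :
    ∃ Y : Matrix (Fin n) (Fin n) K,
      Y ≠ 0 ∧ Yᵀ * J + J * Y = 0 ∧ X * Y - Y * X = lam • Y := by
  have hdetJ : J.det ≠ 0 := ((isUnit_iff_isUnit_det J).mp hJ).ne_zero
  have hdetX : X.det = 0 := det_eq_zero_of_transpose_mul_add_mul_eq_zero h2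
    (by rwa [Fintype.card_fin]) hdetJ hX
  obtain ⟨w, hw0, hw⟩ := exists_mulVec_eq_zero_iff.mpr hdetX
  have hwedge : wedge v w ≠ 0 := by
    rintro h
    obtain ⟨c, rfl⟩ := exists_eq_smul_of_wedge_eq_zero hw0 h
    have : lam • c • w = 0 := by rw [← hev, mulVec_smul, hw, smul_zero]
    exact hv (by simpa [hlam] using this)
  refine ⟨wedge v w * J, fun h => hwedge (hJ.mul_left_injective (by simpa using h)),
    mul_transpose_mul_add_mul_mul_eq_zero hJt (transpose_wedge v w), ?_⟩
  rw [commutator_mul_eq_of_transpose_mul_add_mul_eq_zero hX, mul_wedge_add_wedge_mul_transpose,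
    hev, hw, wedge_zero_right, add_zero, smul_wedge, smul_mul]
end
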